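/- arXiv:1606.03563 — 2 statements merged into one kernel-verified Lean document; each statement's English description precedes it below -/
import Mathlib

section
/- For every n ≥ 4 and every m ∈ {1,…,n}, the square commutes: q_m ∘ φ_n = φ_{n-1} ∘ p_m as homomorphisms from PB_n to G_{n-1}^3. -/
namespace GnkBrunnian

/-! ## Index types for generators -/

/-- Validity of a pair index: `1 ≤ i < j ≤ n`. -/
abbrev P2ok (n : ℕ) (p : ℕ × ℕ) : Prop := 1 ≤ p.1 ∧ p.1 < p.2 ∧ p.2 ≤ n

/-- Index type for the generators `a_{ij}` of `G_n^2` (and `b_{ij}` of `PB_n`). -/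
abbrev PIdx (n : ℕ) := {p : ℕ × ℕ // P2ok n p}

/-- Validity of a triple index: `1 ≤ i < j < k ≤ n`. -/
abbrev T3ok (n : ℕ) (t : ℕ × ℕ × ℕ) : Prop :=
  1 ≤ t.1 ∧ t.1 < t.2.1 ∧ t.2.1 < t.2.2 ∧ t.2.2 ≤ n

/-- Index type for the generators `a_{ijk}` of `G_n^3`. -/
abbrev TIdx (n : ℕ) := {t : ℕ × ℕ × ℕ // T3ok n t}

def sort2 (a b : ℕ) : ℕ × ℕ := (min a b, max a b)

def sort3 (a b c : ℕ) : ℕ × ℕ × ℕ :=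
  (min a (min b c), a + b + c - min a (min b c) - max a (max b c), max a (max b c))

def pairSet {n : ℕ} (p : PIdx n) : Finset ℕ := {p.1.1, p.1.2}

def tripSet {n : ℕ} (t : TIdx n) : Finset ℕ := {t.1.1, t.1.2.1, t.1.2.2}

/-- Reindexing after deleting the strand `m` : indices above `m` are decreased by one. -/
def del (m x : ℕ) : ℕ := if m < x then x - 1 else x

/-! ## The group `G_n^2` -/

/-- The free-group letter `a_{\{a,b\}}` (trivial if the index is out of range). -/
def fgen2 (n a b : ℕ) : FreeGroup (PIdx n) :=
  if h : P2ok n (sort2 a b) then FreeGroup.of ⟨sort2 a b, h⟩ else 1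

/-- The defining relators of `G_n^2`. -/
def rels2 (n : ℕ) : Set (FreeGroup (PIdx n)) :=
  {r | ∃ a : PIdx n, r = .of a * .of a} ∪
  {r | ∃ i j k l : ℕ,
      1 ≤ i ∧ i ≤ n ∧ 1 ≤ j ∧ j ≤ n ∧ 1 ≤ k ∧ k ≤ n ∧ 1 ≤ l ∧ l ≤ n ∧
      i ≠ j ∧ i ≠ k ∧ i ≠ l ∧ j ≠ k ∧ j ≠ l ∧ k ≠ l ∧
      r = fgen2 n i j * fgen2 n k l * (fgen2 n i j)⁻¹ * (fgen2 n k l)⁻¹} ∪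
  {r | ∃ i j k : ℕ,
      1 ≤ i ∧ i ≤ n ∧ 1 ≤ j ∧ j ≤ n ∧ 1 ≤ k ∧ k ≤ n ∧ i ≠ j ∧ i ≠ k ∧ j ≠ k ∧
      r = fgen2 n i j * fgen2 n i k * fgen2 n j k *
          (fgen2 n j k * fgen2 n i k * fgen2 n i j)⁻¹}

/-- The group `G_n^2`. -/
abbrev G2 (n : ℕ) := PresentedGroup (rels2 n)

/-- The generator `a_{\{a,b\}}` of `G_n^2` (trivial if the index is out of range). -/
def ggen2 (n a b : ℕ) : G2 n :=
  if h : P2ok n (sort2 a b) then PresentedGroup.of ⟨sort2 a b, h⟩ else 1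

/-- The element of `G_n^2` represented by a word in the generators. -/
def toG2 {n : ℕ} (β : List (PIdx n)) : G2 n :=
  (β.map fun a => (PresentedGroup.of a : G2 n)).prod

/-! ## The group `G_n^3` -/

/-- The free-group letter `a_{\{a,b,c\}}` (trivial if the index is out of range). -/
def fgen3 (n a b c : ℕ) : FreeGroup (TIdx n) :=
  if h : T3ok n (sort3 a b c) then FreeGroup.of ⟨sort3 a b c, h⟩ else 1

/-- The defining relators of `G_n^3`. -/
def rels3 (n : ℕ) : Set (FreeGroup (TIdx n)) :=
  {r | ∃ a : TIdx n, r = .of a * .of a} ∪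
  {r | ∃ a b : TIdx n, (tripSet a ∩ tripSet b).card < 2 ∧
      r = .of a * .of b * (.of a)⁻¹ * (.of b)⁻¹} ∪
  {r | ∃ i j k l : ℕ,
      1 ≤ i ∧ i ≤ n ∧ 1 ≤ j ∧ j ≤ n ∧ 1 ≤ k ∧ k ≤ n ∧ 1 ≤ l ∧ l ≤ n ∧
      i ≠ j ∧ i ≠ k ∧ i ≠ l ∧ j ≠ k ∧ j ≠ l ∧ k ≠ l ∧
      r = fgen3 n i j k * fgen3 n i j l * fgen3 n i k l * fgen3 n j k l *
          (fgen3 n j k l * fgen3 n i k l * fgen3 n i j l * fgen3 n i j k)⁻¹}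

/-- The group `G_n^3`. -/
abbrev G3 (n : ℕ) := PresentedGroup (rels3 n)

/-- The generator `a_{\{a,b,c\}}` of `G_n^3` (trivial if the index is out of range). -/
def ggen3 (n a b c : ℕ) : G3 n :=
  if h : T3ok n (sort3 a b c) then PresentedGroup.of ⟨sort3 a b c, h⟩ else 1

/-- The element of `G_n^3` represented by a word in the generators. -/
def toG3 {n : ℕ} (β : List (TIdx n)) : G3 n :=
  (β.map fun a => (PresentedGroup.of a : G3 n)).prod

/-! ## The pure braid group `PB_n` (standard Artin/Birman presentation) -/

/-- The defining relators of the pure braid group on `n` strands, in the standard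
presentation on the generators `b_{ij} = A_{ij}`, `1 ≤ i < j ≤ n`. -/
def relsPB (n : ℕ) : Set (FreeGroup (PIdx n)) :=
  {x | ∃ r s i j : ℕ, P2ok n (r, s) ∧ P2ok n (i, j) ∧ (s < i ∨ (i < r ∧ s < j)) ∧
      x = (fgen2 n r s)⁻¹ * fgen2 n i j * fgen2 n r s * (fgen2 n i j)⁻¹} ∪
  {x | ∃ r s j : ℕ, 1 ≤ r ∧ r < s ∧ s < j ∧ j ≤ n ∧
      x = (fgen2 n r s)⁻¹ * fgen2 n s j * fgen2 n r s *
          (fgen2 n r j * fgen2 n s j * (fgen2 n r j)⁻¹)⁻¹} ∪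
  {x | ∃ r s j : ℕ, 1 ≤ r ∧ r < s ∧ s < j ∧ j ≤ n ∧
      x = (fgen2 n r s)⁻¹ * fgen2 n r j * fgen2 n r s *
          ((fgen2 n r j * fgen2 n s j) * fgen2 n r j * (fgen2 n r j * fgen2 n s j)⁻¹)⁻¹} ∪
  {x | ∃ r i s j : ℕ, 1 ≤ r ∧ r < i ∧ i < s ∧ s < j ∧ j ≤ n ∧
      x = (fgen2 n r s)⁻¹ * fgen2 n i j * fgen2 n r s *
          ((fgen2 n r j * fgen2 n s j * (fgen2 n r j)⁻¹ * (fgen2 n s j)⁻¹) * fgen2 n i j *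
           (fgen2 n r j * fgen2 n s j * (fgen2 n r j)⁻¹ * (fgen2 n s j)⁻¹)⁻¹)⁻¹}

/-- The pure braid group on `n` strands. -/
abbrev PB (n : ℕ) := PresentedGroup (relsPB n)

/-- The standard generator `b_{ij}` of `PB_n` (trivial if the index is out of range). -/
def pbgen (n a b : ℕ) : PB n :=
  if h : P2ok n (sort2 a b) then PresentedGroup.of ⟨sort2 a b, h⟩ else 1

/-! ## The elements `c^n_{i,j}` and the homomorphism `φ_n` -/

/-- `c^n_{i,j} = (∏_{k=j+1}^{n} a_{ijk}) * (∏_{k=1, k∉{i,j}}^{j-1} a_{ijk}) ∈ G_n^3`. -/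
def cElt (n i j : ℕ) : G3 n :=
  (((List.range' (j + 1) (n - j)).map fun k => ggen3 n i j k).prod) *
  (((List.range' 1 (j - 1)).map fun k => ggen3 n i j k).prod)

/-- The image of `b_{ij}` under `φ_n`:
`(c^n_{i,i+1})⁻¹ ⋯ (c^n_{i,j-1})⁻¹ (c^n_{i,j})² c^n_{i,j-1} ⋯ c^n_{i,i+1}`. -/
def phiElt (n i j : ℕ) : G3 n :=
  (((List.range' (i + 1) (j - 1 - i)).map fun m => (cElt n i m)⁻¹).prod) *
  (cElt n i j) ^ 2 *
  (((List.range' (i + 1) (j - 1 - i)).reverse.map fun m => cElt n i m).prod)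

/-- `q` is the strand-deletion homomorphism `q_m : G_n^3 → G_{n-1}^3`. -/
def IsShift3 (n m : ℕ) (q : G3 n →* G3 (n - 1)) : Prop :=
  ∀ i j k : ℕ, 1 ≤ i → i < j → j < k → k ≤ n →
    q (ggen3 n i j k) =
      if m = i ∨ m = j ∨ m = k then 1
      else ggen3 (n - 1) (del m i) (del m j) (del m k)

/-- `p` is the strand-deletion homomorphism `p_m : PB_n → PB_{n-1}`. -/
def IsShiftPB (n m : ℕ) (p : PB n →* PB (n - 1)) : Prop :=
  ∀ i j : ℕ, 1 ≤ i → i < j → j ≤ n →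
    p (pbgen n i j) =
      if m = i ∨ m = j then 1 else pbgen (n - 1) (del m i) (del m j)

/-- `φ` is the Manturov–Nikonov homomorphism `φ_n : PB_n → G_n^3`. -/
def IsPhi (n : ℕ) (φ : PB n →* G3 n) : Prop :=
  ∀ i j : ℕ, 1 ≤ i → i < j → j ≤ n → φ (pbgen n i j) = phiElt n i j

/-! ## Words and good condition -/

def good2 {n : ℕ} (β : List (PIdx n)) : Prop := ∀ a : PIdx n, Even (β.count a)

def good3 {n : ℕ} (β : List (TIdx n)) : Prop := ∀ a : TIdx n, Even (β.count a)

/-! ## Free products of copies of `ℤ/2` -/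

/-- The free product of copies of `ℤ/2ℤ` indexed by `ι`. -/
abbrev FP2 (ι : Type) := PresentedGroup {r : FreeGroup ι | ∃ a : ι, r = .of a * .of a}

/-- Indices `l ∈ {1,…,n} \ {i,j,k}`. -/
abbrev SIdx3 (n i j k : ℕ) := {l : ℕ // (1 ≤ l ∧ l ≤ n) ∧ l ≠ i ∧ l ≠ j ∧ l ≠ k}

/-- The group `F_n^3` (for the fixed triple `(i,j,k)`). -/
abbrev F3 (n i j k : ℕ) := FP2 (SIdx3 n i j k → ZMod 2 × ZMod 2)

/-- Indices `k ∈ {1,…,n} \ {i,j}`. -/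
abbrev SIdx2 (n i j : ℕ) := {l : ℕ // (1 ≤ l ∧ l ≤ n) ∧ l ≠ i ∧ l ≠ j}

/-- The group `F_n^2` (for the fixed pair `(i,j)`). -/
abbrev F2 (n i j : ℕ) := FP2 (SIdx2 n i j → ZMod 2)

/-! ## The MN-invariants `w_{(i,j)}` and `w_{(i,j,k)}` -/

/-- The number of occurrences of the generator `a_{\{a,b\}}` in a word over `G_n^2`. -/
def cnt2 {n : ℕ} (β : List (PIdx n)) (a b : ℕ) : ℕ :=
  (β.filter fun x => decide (pairSet x = ({a, b} : Finset ℕ))).length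

/-- The number of occurrences of the generator `a_{\{a,b,c\}}` in a word over `G_n^3`. -/
def cnt3 {n : ℕ} (β : List (TIdx n)) (a b c : ℕ) : ℕ :=
  (β.filter fun x => decide (tripSet x = ({a, b, c} : Finset ℕ))).length

/-- `i_c` for an occurrence of `a_{ij}` with prefix `pre`: `i_c(k) = N_{ik} + N_{jk} (mod 2)`. -/
def iC2 {n : ℕ} (i j : ℕ) (pre : List (PIdx n)) : SIdx2 n i j → ZMod 2 :=
  fun k => ((cnt2 pre i k.1 + cnt2 pre j k.1 : ℕ) : ZMod 2)

/-- The MN-invariant `w_{(i,j)}` of a word over `G_n^2`. -/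
def w2 {n : ℕ} (i j : ℕ) (β : List (PIdx n)) : F2 n i j :=
  (((β.zipIdx.map Prod.swap).filter fun x => decide (pairSet x.2 = ({i, j} : Finset ℕ))).map
    fun x => (PresentedGroup.of (iC2 i j (β.take x.1)) : F2 n i j)).prod

/-- `i_c` for an occurrence of `a_{ijk}` with prefix `pre`:
`i_c(l) = (N_{jkl} + N_{ijl}, N_{ikl} + N_{ijl}) (mod 2)`. -/
def iC3 {n : ℕ} (i j k : ℕ) (pre : List (TIdx n)) : SIdx3 n i j k → ZMod 2 × ZMod 2 :=
  fun l => (((cnt3 pre j k l.1 + cnt3 pre i j l.1 : ℕ) : ZMod 2),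
            ((cnt3 pre i k l.1 + cnt3 pre i j l.1 : ℕ) : ZMod 2))

/-- The MN-invariant `w_{(i,j,k)}` of a word over `G_n^3`. -/
def w3 {n : ℕ} (i j k : ℕ) (β : List (TIdx n)) : F3 n i j k :=
  (((β.zipIdx.map Prod.swap).filter fun x => decide (tripSet x.2 = ({i, j, k} : Finset ℕ))).map
    fun x => (PresentedGroup.of (iC3 i j k (β.take x.1)) : F3 n i j k)).prod

/-! ## Explicit words for `c^n_{i,j}` and `φ_n(b_{ij})` -/

def tripMkS (n a b c : ℕ) : Option (TIdx n) :=
  if h : T3ok n (sort3 a b c) then some ⟨sort3 a b c, h⟩ else none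

def pairMkS (n a b : ℕ) : Option (PIdx n) :=
  if h : P2ok n (sort2 a b) then some ⟨sort2 a b, h⟩ else none

/-- The defining word of `c^n_{i,j}`. -/
def cWord (n i j : ℕ) : List (TIdx n) :=
  ((List.range' (j + 1) (n - j)).filterMap fun k => tripMkS n i j k) ++
  ((List.range' 1 (j - 1)).filterMap fun k => tripMkS n i j k)

/-- The defining word of `φ_n(b_{ij})`, with the inverses of the `c`-words expanded using
`a⁻¹ = a` for generators (i.e. by reversing the words). -/
def phiWord (n i j : ℕ) : List (TIdx n) :=
  (((List.range' (i + 1) (j - 1 - i)).map fun m => (cWord n i m).reverse).flatten) ++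
  cWord n i j ++ cWord n i j ++
  (((List.range' (i + 1) (j - 1 - i)).reverse.map fun m => cWord n i m).flatten)

/-! ## The group `G_{n,p}^2` (parity) -/

/-- Index type for the generators `a_{ij}^ε` of `G_{n,p}^2`. -/
abbrev PPIdx (n : ℕ) := PIdx n × ZMod 2

def fgenP2 (n a b : ℕ) (e : ZMod 2) : FreeGroup (PPIdx n) :=
  if h : P2ok n (sort2 a b) then FreeGroup.of (⟨sort2 a b, h⟩, e) else 1

/-- The defining relators of `G_{n,p}^2`. -/
def relsP2 (n : ℕ) : Set (FreeGroup (PPIdx n)) :=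
  {r | ∃ a : PPIdx n, r = .of a * .of a} ∪
  {r | ∃ (i j k l : ℕ) (e e' : ZMod 2),
      1 ≤ i ∧ i ≤ n ∧ 1 ≤ j ∧ j ≤ n ∧ 1 ≤ k ∧ k ≤ n ∧ 1 ≤ l ∧ l ≤ n ∧
      i ≠ j ∧ i ≠ k ∧ i ≠ l ∧ j ≠ k ∧ j ≠ l ∧ k ≠ l ∧
      r = fgenP2 n i j e * fgenP2 n k l e' * (fgenP2 n i j e)⁻¹ * (fgenP2 n k l e')⁻¹} ∪
  {r | ∃ (i j k : ℕ) (e1 e2 e3 : ZMod 2),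
      1 ≤ i ∧ i < j ∧ j < k ∧ k ≤ n ∧ e1 + e2 + e3 = 0 ∧
      r = fgenP2 n i j e1 * fgenP2 n i k e2 * fgenP2 n j k e3 *
          (fgenP2 n j k e3 * fgenP2 n i k e2 * fgenP2 n i j e1)⁻¹}

/-- The group `G_{n,p}^2`. -/
abbrev GP2 (n : ℕ) := PresentedGroup (relsP2 n)

/-- The element of `G_{n,p}^2` represented by a word in the generators. -/
def toGP2 {n : ℕ} (β : List (PPIdx n)) : GP2 n :=
  (β.map fun a => (PresentedGroup.of a : GP2 n)).prod

/-! ## The parity invariant `w^p_{ij}` on `G_{n,p}^2` -/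

/-- The number of occurrences of `a_{\{a,b\}}^e` in a word over `G_{n,p}^2`. -/
def cntP2 {n : ℕ} (β : List (PPIdx n)) (a b : ℕ) (e : ZMod 2) : ℕ :=
  (β.filter fun x => decide (pairSet x.1 = ({a, b} : Finset ℕ) ∧ x.2 = e)).length

/-- `i^p_c` for an occurrence of `a_{ij}^e` with prefix `pre`. -/
def iCP2 {n : ℕ} (i j : ℕ) (e : ZMod 2) (pre : List (PPIdx n)) : SIdx2 n i j → ZMod 2 :=
  fun k =>
    if e = 0 then ((cntP2 pre i k.1 0 + cntP2 pre j k.1 0 : ℕ) : ZMod 2)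
    else ((cntP2 pre i k.1 0 + cntP2 pre j k.1 1 : ℕ) : ZMod 2)

/-- The invariant `w^p_{ij}` of a word over `G_{n,p}^2`. -/
def wP2 {n : ℕ} (i j : ℕ) (β : List (PPIdx n)) : F2 n i j :=
  (((β.zipIdx.map Prod.swap).filter fun x => decide (pairSet x.2.1 = ({i, j} : Finset ℕ))).map
    fun x => (PresentedGroup.of (iCP2 i j x.2.2 (β.take x.1)) : F2 n i j)).prod

/-! ## The map `ψ_l : G_{n+1}^2 → G_{n,p}^2` -/

/-- The word over `G_{n,p}^2` obtained from a word over `G_{n+1}^2` by deleting the strand `l`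
and recording parities. -/
def psiWord (n l : ℕ) (β : List (PIdx (n + 1))) : List (PPIdx n) :=
  (β.zipIdx.map Prod.swap).filterMap fun x =>
    if l = x.2.1.1 ∨ l = x.2.1.2 then none
    else (pairMkS n (del l x.2.1.1) (del l x.2.1.2)).map fun p =>
      (p, ((cnt2 (β.take x.1) x.2.1.1 l + cnt2 (β.take x.1) x.2.1.2 l : ℕ) : ZMod 2))

/-! ## The group `G_{n,p}^3` (parity) -/

/-- Index type for the generators `a_{ijk}^ε` of `G_{n,p}^3`. -/
abbrev TPIdx (n : ℕ) := TIdx n × ZMod 2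

def fgenP3 (n a b c : ℕ) (e : ZMod 2) : FreeGroup (TPIdx n) :=
  if h : T3ok n (sort3 a b c) then FreeGroup.of (⟨sort3 a b c, h⟩, e) else 1

/-- The defining relators of `G_{n,p}^3`. -/
def relsP3 (n : ℕ) : Set (FreeGroup (TPIdx n)) :=
  {r | ∃ a : TPIdx n, r = .of a * .of a} ∪
  {r | ∃ a b : TPIdx n, (tripSet a.1 ∩ tripSet b.1).card < 2 ∧
      r = (.of a * .of b) ^ 2} ∪
  {r | ∃ (i j k l : ℕ) (ei ej ek el : ZMod 2),
      1 ≤ i ∧ i ≤ n ∧ 1 ≤ j ∧ j ≤ n ∧ 1 ≤ k ∧ k ≤ n ∧ 1 ≤ l ∧ l ≤ n ∧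
      i ≠ j ∧ i ≠ k ∧ i ≠ l ∧ j ≠ k ∧ j ≠ l ∧ k ≠ l ∧
      (if max (max i j) (max k l) = i then ej + ek + el
       else if max (max i j) (max k l) = j then ei + ek + el
       else if max (max i j) (max k l) = k then ei + ej + el
       else ei + ej + ek) = 0 ∧
      r = (fgenP3 n i j k el * fgenP3 n i j l ek * fgenP3 n i k l ej * fgenP3 n j k l ei) ^ 2}

/-- The group `G_{n,p}^3`. -/
abbrev GP3 (n : ℕ) := PresentedGroup (relsP3 n)

/-- The element of `G_{n,p}^3` represented by a word in the generators. -/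
def toGP3 {n : ℕ} (β : List (TPIdx n)) : GP3 n :=
  (β.map fun a => (PresentedGroup.of a : GP3 n)).prod

/-! ## The map `f : G_{n+1}^3 → G_{n,p}^3` -/

/-- The word over `G_{n,p}^3` obtained from a word over `G_{n+1}^3` by deleting the letters
containing the index `n+1` and recording parities. -/
def fWord (n : ℕ) (β : List (TIdx (n + 1))) : List (TPIdx n) :=
  (β.zipIdx.map Prod.swap).filterMap fun x =>
    if x.2.1.2.2 = n + 1 then none
    else (tripMkS n x.2.1.1 x.2.1.2.1 x.2.1.2.2).map fun t =>
      (t, ((cnt3 (β.take x.1) x.2.1.2.1 x.2.1.2.2 (n + 1) +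
            cnt3 (β.take x.1) x.2.1.1 x.2.1.2.2 (n + 1) : ℕ) : ZMod 2))

/-! ## The parity invariant `w^p_{ijk}` on `G_{n,p}^3` -/

/-- The group `F_n^3` with values in `ℤ/2` (for the parity invariant). -/
abbrev F3p (n i j k : ℕ) := FP2 (SIdx3 n i j k → ZMod 2)

/-- The number of occurrences of `a_{\{a,b,c\}}^e` in a word over `G_{n,p}^3`. -/
def cntP3 {n : ℕ} (β : List (TPIdx n)) (a b c : ℕ) (e : ZMod 2) : ℕ :=
  (β.filter fun x => decide (tripSet x.1 = ({a, b, c} : Finset ℕ) ∧ x.2 = e)).length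

/-- `i^p_c` for an occurrence of `a_{ijk}^e` with prefix `pre` (here `k > i, j`). -/
def iCP3 {n : ℕ} (i j k : ℕ) (e : ZMod 2) (pre : List (TPIdx n)) : SIdx3 n i j k → ZMod 2 :=
  fun l =>
    if e = 0 then
      (if k < l.1 then
        ((cntP3 pre i k l.1 0 + cntP3 pre j k l.1 0 + cntP3 pre i j l.1 1 : ℕ) : ZMod 2)
      else ((cntP3 pre i k l.1 0 + cntP3 pre j k l.1 0 : ℕ) : ZMod 2))
    else
      (if k < l.1 then
        ((cntP3 pre i k l.1 0 + cntP3 pre j k l.1 1 + cntP3 pre i j l.1 0 : ℕ) : ZMod 2)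
      else ((cntP3 pre i k l.1 0 + cntP3 pre j k l.1 1 : ℕ) : ZMod 2))

/-- The invariant `w^p_{ijk}` of a word over `G_{n,p}^3`. -/
def wP3 {n : ℕ} (i j k : ℕ) (β : List (TPIdx n)) : F3p n i j k :=
  (((β.zipIdx.map Prod.swap).filter fun x => decide (tripSet x.2.1 = ({i, j, k} : Finset ℕ))).map
    fun x => (PresentedGroup.of (iCP3 i j k x.2.2 (β.take x.1)) : F3p n i j k)).prod

/-! `q_m` kills the generators `a_{ijk}` with `m ∈ {i,j,k}` and renumbers the others by
`del m`. Since `del m` maps `[s, s + c) \ {m}` monotonically onto `[del m s, del m (s + c))`,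
the factors of `c^n_{i,j}` surviving `q_m` (for `m ∉ {i,j}`) are renumbered onto exactly the
factors of `c^{n-1}_{del m i, del m j}`; for `m ∈ {i,j}` they all die. Writing `φ_n(b_{ij})` as
the conjugate of `(c^n_{i,j})²` by `∏_t (c^n_{i,t})⁻¹`, the conjugator transforms the same way
when `m ≠ i`, and for `m = j` the image is a conjugate of `1`. So `q_m ∘ φ_n` and
`φ_{n-1} ∘ p_m` agree on every generator `b_{ij}`. -/

def phiConj (n i j : ℕ) : G3 n :=
  ((List.range' (i + 1) (j - 1 - i)).map fun t => (cElt n i t)⁻¹).prod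

theorem phiElt_eq_conj (n i j : ℕ) :
    phiElt n i j = phiConj n i j * cElt n i j ^ 2 * (phiConj n i j)⁻¹ := by
  rw [phiElt, phiConj, List.map_reverse, List.prod_reverse_noncomm, List.map_map]
  rfl

section StrandDeletion

theorem del_cases (m x : ℕ) : m < x ∧ del m x = x - 1 ∨ x ≤ m ∧ del m x = x := by
  unfold del; split_ifs <;> omega

theorem del_succ_of_ne {m x : ℕ} (h : x ≠ m) : del m (x + 1) = del m x + 1 := by
  unfold del; split_ifs <;> omega

theorem del_succ_self (m : ℕ) : del m (m + 1) = del m m := by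
  simp [del]

theorem prod_map_range'_of_del {M : Type*} [Monoid M] {f g : ℕ → M} {m : ℕ}
    (hfm : f m = 1) (hf : ∀ k ≠ m, f k = g (del m k)) (s c : ℕ) :
    ((List.range' s c).map f).prod =
      ((List.range' (del m s) (del m (s + c) - del m s)).map g).prod := by
  induction c generalizing s with
  | zero => simp
  | succ c ih =>
    rw [List.range'_succ, List.map_cons, List.prod_cons, ih,
      show s + 1 + c = s + (c + 1) by omega]
    rcases eq_or_ne s m with rfl | hs
    · rw [hfm, one_mul, del_succ_self]
    · have hlen : del m (s + (c + 1)) - (del m s + 1) + 1 = del m (s + (c + 1)) - del m s := by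
        unfold del; split_ifs <;> omega
      rw [hf s hs, del_succ_of_ne hs, ← List.prod_cons, ← List.map_cons, ← List.range'_succ,
        hlen]

theorem sort3_perm (a b c : ℕ) :
    sort3 a b c = (a, b, c) ∨ sort3 a b c = (a, c, b) ∨ sort3 a b c = (b, a, c) ∨
      sort3 a b c = (b, c, a) ∨ sort3 a b c = (c, a, b) ∨ sort3 a b c = (c, b, a) := by
  simp only [sort3, Prod.mk.injEq]; omega

theorem ggen3_congr {n a b c a' b' c' : ℕ} (h : sort3 a b c = sort3 a' b' c') :
    ggen3 n a b c = ggen3 n a' b' c' := by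
  simp only [ggen3, h]

variable {n m : ℕ} {q : G3 n →* G3 (n - 1)}

theorem IsShift3.map_ggen3 (hq : IsShift3 n m q) (a b c : ℕ) :
    q (ggen3 n a b c) =
      if m = a ∨ m = b ∨ m = c then 1 else ggen3 (n - 1) (del m a) (del m b) (del m c) := by
  by_cases hT : T3ok n (sort3 a b c)
  · obtain ⟨h1, h12, h23, h3⟩ := hT
    -- `sort3` is a permutation of its arguments, so both sides only depend on the sorted triple.
    have hsort : sort3 a b c = sort3 (sort3 a b c).1 (sort3 a b c).2.1 (sort3 a b c).2.2 := by
      simp only [sort3, Prod.mk.injEq] at *; omega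
    rw [ggen3_congr hsort, hq _ _ _ h1 h12 h23 h3]
    rcases sort3_perm a b c with h | h | h | h | h | h <;> rw [h] <;> split_ifs <;>
      first
      | rfl
      | (exfalso; tauto)
      | exact ggen3_congr (by simp only [sort3, Prod.mk.injEq]; omega)
  · rw [ggen3, dif_neg hT, map_one]
    split_ifs with hm
    · rfl
    · rw [ggen3, dif_neg]
      intro hT'
      simp only [T3ok, sort3] at hT
      have := del_cases m a; have := del_cases m b; have := del_cases m c
      rcases sort3_perm (del m a) (del m b) (del m c) with h | h | h | h | h | h <;>
        rw [h] at hT' <;> simp only [T3ok] at hT' <;> omega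

theorem IsShift3.map_cElt (hq : IsShift3 n m q) (hm1 : 1 ≤ m) (hm2 : m ≤ n) (i j : ℕ) :
    q (cElt n i j) = if m = i ∨ m = j then 1 else cElt (n - 1) (del m i) (del m j) := by
  simp only [cElt, map_mul, map_list_prod, List.map_map, Function.comp_def, hq.map_ggen3]
  split_ifs with hij
  · simp [← or_assoc, hij]
  · have hterm : ∀ k ≠ m,
        (if m = i ∨ m = j ∨ m = k then 1 else ggen3 (n - 1) (del m i) (del m j) (del m k)) =
          ggen3 (n - 1) (del m i) (del m j) (del m k) :=
      fun k hk => if_neg (by omega)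
    rw [prod_map_range'_of_del (by simp) hterm, prod_map_range'_of_del (by simp) hterm]
    have := del_cases m j; have := del_cases m 1; have := del_cases m (j + 1 + (n - j))
    have := del_cases m (1 + (j - 1)); rw [del_succ_of_ne (by omega)]
    congr 4 <;> omega

theorem IsShift3.map_phiConj (hq : IsShift3 n m q) (hm1 : 1 ≤ m) (hm2 : m ≤ n) {i : ℕ}
    (hmi : m ≠ i) (j : ℕ) : q (phiConj n i j) = phiConj (n - 1) (del m i) (del m j) := by
  simp only [phiConj, map_list_prod, List.map_map, Function.comp_def, map_inv,
    hq.map_cElt hm1 hm2]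
  rw [prod_map_range'_of_del (m := m) (g := fun t => (cElt (n - 1) (del m i) t)⁻¹) (by simp)
    (fun k hk => by rw [if_neg (by omega)])]
  have := del_cases m i; have := del_cases m j; have := del_cases m (i + 1 + (j - 1 - i))
  rw [del_succ_of_ne (Ne.symm hmi),
    show del m (i + 1 + (j - 1 - i)) - (del m i + 1) = del m j - 1 - del m i by omega]

theorem IsShift3.map_phiElt (hq : IsShift3 n m q) (hm1 : 1 ≤ m) (hm2 : m ≤ n) (i j : ℕ) :
    q (phiElt n i j) = if m = i ∨ m = j then 1 else phiElt (n - 1) (del m i) (del m j) := by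
  rw [phiElt_eq_conj, map_mul, map_mul, map_inv, map_pow, hq.map_cElt hm1 hm2]
  split_ifs with h
  · rw [one_pow, mul_one, mul_inv_cancel]
  · rw [hq.map_phiConj hm1 hm2 (by tauto), phiElt_eq_conj]

end StrandDeletion

theorem pbgen_of_lt {n i j : ℕ} (hi : 1 ≤ i) (hij : i < j) (hj : j ≤ n) :
    pbgen n i j = PresentedGroup.of ⟨(i, j), hi, hij, hj⟩ := by
  have hsort : sort2 i j = (i, j) := by simp only [sort2, Prod.mk.injEq]; omega
  simp only [pbgen, hsort, dif_pos (show P2ok n (i, j) from ⟨hi, hij, hj⟩)]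

theorem statement_4_general (n m : ℕ) (hm1 : 1 ≤ m) (hm2 : m ≤ n)
    (q : G3 n →* G3 (n - 1)) (hq : IsShift3 n m q)
    (p : PB n →* PB (n - 1)) (hp : IsShiftPB n m p)
    (φ : PB n →* G3 n) (hφ : IsPhi n φ)
    (φ' : PB (n - 1) →* G3 (n - 1)) (hφ' : IsPhi (n - 1) φ') :
    q.comp φ = φ'.comp p := by
  refine PresentedGroup.ext fun ⟨(i, j), hi, hij, hj⟩ => ?_
  rw [MonoidHom.comp_apply, MonoidHom.comp_apply, ← pbgen_of_lt hi hij hj, hφ i j hi hij hj,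
    hp i j hi hij hj, hq.map_phiElt hm1 hm2]
  split_ifs with h
  · rw [map_one]
  · have := del_cases m i; have := del_cases m j
    rw [hφ' (del m i) (del m j) (by omega) (by omega) (by omega)]

theorem statement_4 (n m : ℕ) (hn : 4 ≤ n) (hm1 : 1 ≤ m) (hm2 : m ≤ n)
    (q : G3 n →* G3 (n - 1)) (hq : IsShift3 n m q)
    (p : PB n →* PB (n - 1)) (hp : IsShiftPB n m p)
    (φ : PB n →* G3 n) (hφ : IsPhi n φ)
    (φ' : PB (n - 1) →* G3 (n - 1)) (hφ' : IsPhi (n - 1) φ') :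
    q.comp φ = φ'.comp p :=
  statement_4_general n m hm1 hm2 q hq p hp φ hφ φ' hφ'

end GnkBrunnian
end

section
/- Let n ≥ 4 and let i,j,k ∈ {1,…,n} be distinct. For any pair l < m with |{l,m} ∩ {i,j,k}| < 2, the defining word of φ_n(b_{lm}) (which is in good condition) satisfies w_{(i,j,k)}(φ_n(b_{lm})) = 1 in F_n^3. -/
namespace GnkBrunnian

/-! Every letter of the word of `c^n_{l,m}` contains both `l` and `m`, so when
`{l, m} ⊄ {i, j, k}` the word of `φ_n(b_{lm})`, which is `X c c Xʳ` with `Xʳ` the reversal of `X`,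
has all its `a_{ijk}` letters in `X` and `Xʳ`. The index `i_c` of an occurrence is an additive
function of the prefix before it, with values in a group of exponent two, and `c c` has weight
zero; hence mirrored occurrences in `X` and `Xʳ` get the same index and cancel in the free
product of copies of `ℤ/2`. -/

section PrefixProd

variable {α A G : Type*} [AddCommMonoid A] [Group G]
  (g : A → G) (χ : α → A) (P : α → Prop) [DecidablePred P]

/-- `∏ g (a + χ x₁ + ⋯ + χ x_{p-1})` over the positions `p` of `x₁ ⋯ x_r` with `P x_p`. -/
def prefixProd : A → List α → G
  | _, [] => 1
  | a, x :: t => (if P x then g a else 1) * prefixProd (a + χ x) t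

variable {g χ P}

@[simp] lemma prefixProd_nil (a : A) : prefixProd g χ P a [] = 1 := rfl

@[simp] lemma prefixProd_cons (a : A) (x : α) (t : List α) :
    prefixProd g χ P a (x :: t) = (if P x then g a else 1) * prefixProd g χ P (a + χ x) t :=
  rfl

lemma prefixProd_append (a : A) (β γ : List α) :
    prefixProd g χ P a (β ++ γ) =
      prefixProd g χ P a β * prefixProd g χ P (a + (β.map χ).sum) γ := by
  induction β generalizing a with
  | nil => simp
  | cons x t ih => simp [ih, mul_assoc, add_assoc]

lemma prefixProd_eq_one_of_forall_not (a : A) {β : List α} (hβ : ∀ x ∈ β, ¬P x) :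
    prefixProd g χ P a β = 1 := by
  induction β generalizing a with
  | nil => rfl
  | cons x t ih =>
    simp only [List.forall_mem_cons] at hβ
    simp [hβ.1, ih _ hβ.2]

/-- The two occurrences of a marked letter at mirrored positions of `X ++ B ++ X.reverse`
see prefixes differing by the letter itself and a word of total weight zero, so they
contribute the same involution `g a` and cancel. -/
lemma prefixProd_append_append_reverse (hA : ∀ a : A, a + a = 0)
    (hg : ∀ a, g a * g a = 1) (hχ : ∀ x, P x → χ x = 0)
    {B : List α} (hB : ∀ x ∈ B, ¬P x) (hBsum : (B.map χ).sum = 0) (X : List α) (a : A) :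
    prefixProd g χ P a (X ++ B ++ X.reverse) = 1 := by
  induction X generalizing a with
  | nil => simpa using prefixProd_eq_one_of_forall_not a hB
  | cons x t ih =>
    have hsum : ((t ++ B ++ t.reverse).map χ).sum = 0 := by
      simp [List.sum_reverse, hBsum, hA]
    have hword : x :: t ++ B ++ (x :: t).reverse = x :: ((t ++ B ++ t.reverse) ++ [x]) := by
      simp
    rw [hword, prefixProd_cons, prefixProd_append, ih, hsum]
    by_cases hx : P x
    · simp [hx, hχ x hx, hg]
    · simp [hx]

lemma prod_map_filter_zipIdx_eq_prefixProd (a : A) (β : List α) :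
    (((β.zipIdx.map Prod.swap).filter fun x => decide (P x.2)).map
        fun x => g (a + ((β.take x.1).map χ).sum)).prod = prefixProd g χ P a β := by
  induction β generalizing a with
  | nil => rfl
  | cons x t ih =>
    rw [prefixProd_cons, ← ih (a + χ x), List.zipIdx_cons, List.zipIdx_succ]
    by_cases hx : P x <;>
      simp [hx, List.filter_map, Function.comp_def, add_assoc]

end PrefixProd

lemma FP2.of_mul_self {ι : Type} (b : ι) :
    (PresentedGroup.of b : FP2 ι) * PresentedGroup.of b = 1 :=
  (map_mul (PresentedGroup.mk _) _ _).symm.trans (PresentedGroup.one_of_mem ⟨b, rfl⟩)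

section MNInvariant

variable {n : ℕ} (i j k : ℕ)

lemma cnt3_append (β γ : List (TIdx n)) (a b c : ℕ) :
    cnt3 (β ++ γ) a b c = cnt3 β a b c + cnt3 γ a b c := by
  simp [cnt3, List.filter_append]

lemma iC3_append (β γ : List (TIdx n)) :
    iC3 i j k (β ++ γ) = iC3 i j k β + iC3 i j k γ := by
  funext l
  simp only [iC3, cnt3_append, Pi.add_apply, Prod.mk_add_mk, Nat.cast_add]
  congr 1 <;> ring

lemma iC3_eq_sum (β : List (TIdx n)) :
    iC3 i j k β = (β.map fun x => iC3 i j k [x]).sum := by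
  induction β with
  | nil => rfl
  | cons x t ih => rw [← List.singleton_append, iC3_append, ih]; rfl

lemma iC3_singleton_eq_zero {x : TIdx n} (hx : tripSet x = {i, j, k}) :
    iC3 i j k [x] = 0 := by
  funext l
  obtain ⟨-, hli, hlj, hlk⟩ := l.2
  have hne : ∀ a b : ℕ, tripSet x ≠ {a, b, l.1} := fun a b h => by
    have : l.1 ∈ tripSet x := h ▸ by simp
    simp [hx, hli, hlj, hlk] at this
  simp [iC3, cnt3, hne]

lemma w3_eq_prefixProd (β : List (TIdx n)) :
    w3 i j k β = prefixProd (fun a => (PresentedGroup.of a : F3 n i j k))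
      (fun x => iC3 i j k [x]) (fun x => tripSet x = {i, j, k}) 0 β := by
  rw [← prod_map_filter_zipIdx_eq_prefixProd, w3]
  simp only [zero_add, ← iC3_eq_sum]

end MNInvariant

lemma mem_tripSet_of_mem_cWord {n l m : ℕ} {x : TIdx n} (hx : x ∈ cWord n l m) :
    l ∈ tripSet x ∧ m ∈ tripSet x := by
  obtain ⟨c, hc⟩ : ∃ c, tripMkS n l m c = some x := by
    rcases List.mem_append.mp hx with h | h <;>
      · obtain ⟨c, -, hc⟩ := List.mem_filterMap.mp h; exact ⟨c, hc⟩
  unfold tripMkS at hc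
  split at hc
  · cases hc
    simp only [tripSet, sort3, Finset.mem_insert, Finset.mem_singleton]
    omega
  · cases hc

lemma phiWord_eq_append_reverse (n l m : ℕ) :
    phiWord n l m =
      ((List.range' (l + 1) (m - 1 - l)).map fun m' => (cWord n l m').reverse).flatten
        ++ (cWord n l m ++ cWord n l m)
        ++ ((List.range' (l + 1) (m - 1 - l)).map fun m' =>
              (cWord n l m').reverse).flatten.reverse := by
  simp [phiWord, List.reverse_flatten, List.map_reverse, Function.comp_def]

theorem statement_8_general (n i j k l m : ℕ) (hlm : l < m)
    (hcap : ((({l, m} : Finset ℕ)) ∩ (({i, j, k} : Finset ℕ))).card < 2) :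
    good3 (phiWord n l m) ∧ w3 i j k (phiWord n l m) = 1 := by
  set c := cWord n l m
  set X := ((List.range' (l + 1) (m - 1 - l)).map fun m' => (cWord n l m').reverse).flatten
  have hunmarked : ∀ x ∈ c, tripSet x ≠ {i, j, k} := by
    intro x hx hxijk
    have hlm_mem := mem_tripSet_of_mem_cWord hx
    rw [hxijk] at hlm_mem
    have hsub : ({l, m} : Finset ℕ) ⊆ {i, j, k} :=
      Finset.insert_subset hlm_mem.1 (Finset.singleton_subset_iff.mpr hlm_mem.2)
    rw [Finset.inter_eq_left.mpr hsub, Finset.card_pair hlm.ne] at hcap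
    omega
  have hA : ∀ a : SIdx3 n i j k → ZMod 2 × ZMod 2, a + a = 0 := fun a =>
    funext fun _ => Prod.ext (CharTwo.add_self_eq_zero _) (CharTwo.add_self_eq_zero _)
  rw [phiWord_eq_append_reverse]
  refine ⟨fun a => ⟨List.count a X + List.count a c, ?_⟩, ?_⟩
  · simp only [List.count_append, List.count_reverse]
    ring
  rw [w3_eq_prefixProd]
  refine prefixProd_append_append_reverse hA (fun _ => FP2.of_mul_self _)
    (fun x hx => iC3_singleton_eq_zero i j k hx)
    (List.forall_mem_append.mpr ⟨hunmarked, hunmarked⟩) ?_ X 0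
  rw [List.map_append, List.sum_append, hA]

theorem statement_8 (n i j k l m : ℕ) (hn : 4 ≤ n)
    (hi : 1 ≤ i ∧ i ≤ n) (hj : 1 ≤ j ∧ j ≤ n) (hk : 1 ≤ k ∧ k ≤ n)
    (hij : i ≠ j) (hik : i ≠ k) (hjk : j ≠ k)
    (hl : 1 ≤ l) (hlm : l < m) (hm : m ≤ n)
    (hcap : ((({l, m} : Finset ℕ)) ∩ (({i, j, k} : Finset ℕ))).card < 2) :
    good3 (phiWord n l m) ∧ w3 i j k (phiWord n l m) = 1 :=
  statement_8_general n i j k l m hlm hcap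

end GnkBrunnian
end
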